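/- Let f(x,y) = sqrt((x+y−2)/(x+y)) − sqrt((x+y−2)/(x·y)). For all integers x, y with 2 ≤ x ≤ y and y ≥ 5, one has f(x,y) ≥ f(2,5) = sqrt(5/7) − 1/√2 > 0, and moreover f(3,3) > f(2,5). -/
import Mathlib


noncomputable def f (x y : ℝ) : ℝ :=
  Real.sqrt ((x + y - 2) / (x + y)) - Real.sqrt ((x + y - 2) / (x * y))

lemma f25_eq : f 2 5 = Real.sqrt (5 / 7) - 1 / Real.sqrt 2 := by
  unfold f
  rw [show ((2:ℝ)+5-2)/(2+5) = 5/7 by norm_num,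
    show ((2:ℝ)+5-2)/(2*5) = 2⁻¹ by norm_num, Real.sqrt_inv, one_div]

theorem f_ge_f_two_five (x y : ℤ) (hx : 2 ≤ x) (hxy : x ≤ y) (hy : 5 ≤ y) :
    f x y ≥ f 2 5 ∧ f 2 5 = Real.sqrt (5 / 7) - 1 / Real.sqrt 2 ∧ (0 : ℝ) < f 2 5 ∧
    f 2 5 < f 3 3 := by
  have hX : (2 : ℝ) ≤ (x : ℝ) := by exact_mod_cast hx
  have hY : (5 : ℝ) ≤ (y : ℝ) := by exact_mod_cast hy
  have hsq2 : (0:ℝ) < Real.sqrt 2 := Real.sqrt_pos.mpr (by norm_num)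
  have hhalf : Real.sqrt (1/2) = 1 / Real.sqrt 2 := by
    rw [show (1:ℝ)/2 = 2⁻¹ by norm_num, Real.sqrt_inv, one_div]
  refine ⟨?_, f25_eq, ?_, ?_⟩
  · rw [f25_eq]
    unfold f
    set X := (x : ℝ)
    set Y := (y : ℝ)
    have h1 : Real.sqrt (5/7) ≤ Real.sqrt ((X + Y - 2) / (X + Y)) := by
      apply Real.sqrt_le_sqrt
      rw [div_le_div_iff₀ (by norm_num) (by linarith)]
      nlinarith
    have h2 : Real.sqrt ((X + Y - 2) / (X * Y)) ≤ 1 / Real.sqrt 2 := by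
      rw [← hhalf]
      apply Real.sqrt_le_sqrt
      rw [div_le_div_iff₀ (by nlinarith) (by norm_num)]
      nlinarith
    linarith
  · rw [f25_eq]
    have : Real.sqrt (1/2) < Real.sqrt (5/7) := by
      apply Real.sqrt_lt_sqrt <;> norm_num
    linarith [hhalf ▸ this]
  · rw [f25_eq]
    unfold f
    rw [show ((3:ℝ)+3-2)/(3+3) = 4/6 by norm_num,
      show ((3:ℝ)+3-2)/(3*3) = (2/3)^2 by norm_num, Real.sqrt_sq (by norm_num)]
    have h1 : Real.sqrt (5/7) < 0.8452 := by
      nlinarith [Real.sq_sqrt (show (0:ℝ) ≤ 5/7 by norm_num), Real.sqrt_nonneg ((5:ℝ)/7)]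
    have h2 : (0.7071 : ℝ) < 1 / Real.sqrt 2 := by
      rw [lt_div_iff₀ hsq2]
      nlinarith [Real.sq_sqrt (show (0:ℝ) ≤ 2 by norm_num), Real.sqrt_nonneg (2:ℝ)]
    have h3 : (0.8164 : ℝ) < Real.sqrt (4/6) := by
      have : (0.8164 : ℝ)^2 < 4/6 := by norm_num
      nlinarith [Real.sq_sqrt (show (0:ℝ) ≤ 4/6 by norm_num), Real.sqrt_nonneg ((4:ℝ)/6)]
    linarith
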